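/- The gauge algebra of the truncated deformed abelian Chern–Simons theory remains abelian up to third order in the deformation: for all smooth λ₁, λ₂: ℝ³ → ℝ and every smooth vector field B: ℝ³ → ℝ³, the commutator of deformed gauge variations Cₜ(B) := (d/ds)|_{s=0} δ̂ₜ,λ₂( B + s·δ̂ₜ,λ₁(B) ) − (d/ds)|_{s=0} δ̂ₜ,λ₁( B + s·δ̂ₜ,λ₂(B) ) is a polynomial in t with smooth vector-field coefficients whose coefficients in t-degrees 0, 1 and 2 all vanish. -/

import Mathlib

/- Write w = v·B and gₖ = v·∇λₖ. Since δ̂ₜ,λ(B) is quadratic in B, the s-derivative is the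
linearization of δ̂ₜ,λ at B in the direction δ̂ₜ,μ(B), and v·δ̂ₜ,μ(B) = g_μ(1 − 2tw − ½t²w²).
In the antisymmetrized combination the terms along B cancel, and what remains is
A = g₁∇λ₂ − g₂∇λ₁ times t[(1 − tw − ½t²w²) − (1 + tw)(1 − 2tw − ½t²w²)] = 2t³w² + ½t⁴w³. -/

noncomputable section

abbrev V3 := Fin 3 → ℝ

/-- Partial derivative ∂_i f at x. -/
def pd (f : V3 → ℝ) (i : Fin 3) (x : V3) : ℝ :=
  fderiv ℝ f x (Pi.single i 1)

/-- Truncated deformed gauge transformation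
  δ̂ₜ,λ(B) = ∇λ − t(v·B)∇λ − t(v·∇λ)B − ½t²(v·B)²∇λ. -/
def hdelta (v : V3) (t : ℝ) (lam : V3 → ℝ) (B : V3 → V3) : V3 → V3 :=
  fun x a => pd lam a x - t * (∑ i, v i * B x i) * pd lam a x
    - t * (∑ i, v i * pd lam i x) * B x a
    - (1 / 2) * t ^ 2 * (∑ i, v i * B x i) ^ 2 * pd lam a x

lemma contDiff_pd {n : WithTop ℕ∞} {lam : V3 → ℝ} (h : ContDiff ℝ (n + 1) lam) (i : Fin 3) :
    ContDiff ℝ n (pd lam i) :=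
  (h.fderiv_right le_rfl).clm_apply contDiff_const

lemma contDiff_sum_const_mul {E ι : Type*} [NormedAddCommGroup E] [NormedSpace ℝ E]
    [Fintype ι] {n : WithTop ℕ∞} (v : ι → ℝ) {f : E → ι → ℝ} (hf : ContDiff ℝ n f) :
    ContDiff ℝ n (fun x => ∑ i, v i * f x i) :=
  ContDiff.sum fun i _ => contDiff_const.mul (contDiff_pi.mp hf i)

lemma deriv_linear_add_quadratic_zero (c L Q : ℝ) :
    deriv (fun s : ℝ => c + s * L + s ^ 2 * Q) 0 = L := by
  have h : HasDerivAt (fun s : ℝ => c + s * L + s ^ 2 * Q) (1 * L + (2 * 0 ^ 1) * Q) 0 :=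
    (((hasDerivAt_id' 0).mul_const L).const_add c).add ((hasDerivAt_pow 2 0).mul_const Q)
  simpa using h.deriv

section hdelta

variable (v : V3) (t : ℝ) (lam : V3 → ℝ) (B : V3 → V3) (x : V3)

lemma hdelta_add_smul (D : V3 → V3) (s : ℝ) (a : Fin 3) :
    hdelta v t lam (fun y b => B y b + s * D y b) x a
      = hdelta v t lam B x a
        + s * (- t * (∑ i, v i * D x i) * pd lam a x
            - t * (∑ i, v i * pd lam i x) * D x a
            - t ^ 2 * (∑ i, v i * B x i) * (∑ i, v i * D x i) * pd lam a x)
        + s ^ 2 * (- (1 / 2) * t ^ 2 * (∑ i, v i * D x i) ^ 2 * pd lam a x) := by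
  have hsum : ∑ i, v i * (B x i + s * D x i) = ∑ i, v i * B x i + s * ∑ i, v i * D x i := by
    simp only [mul_add, Finset.sum_add_distrib, Finset.mul_sum, mul_left_comm]
  simp only [hdelta, hsum]
  ring

lemma deriv_hdelta_add_smul (D : V3 → V3) (a : Fin 3) :
    deriv (fun s : ℝ => hdelta v t lam (fun y b => B y b + s * D y b) x a) 0
      = - t * (∑ i, v i * D x i) * pd lam a x
        - t * (∑ i, v i * pd lam i x) * D x a
        - t ^ 2 * (∑ i, v i * B x i) * (∑ i, v i * D x i) * pd lam a x := by
  simp only [hdelta_add_smul]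
  exact deriv_linear_add_quadratic_zero _ _ _

lemma sum_mul_hdelta :
    ∑ i, v i * hdelta v t lam B x i
      = (∑ i, v i * pd lam i x) *
        (1 - 2 * t * (∑ i, v i * B x i) - (1 / 2) * t ^ 2 * (∑ i, v i * B x i) ^ 2) := by
  have hterm : ∀ i, v i * hdelta v t lam B x i
      = (1 - t * (∑ j, v j * B x j) - (1 / 2) * t ^ 2 * (∑ j, v j * B x j) ^ 2)
          * (v i * pd lam i x)
        - t * (∑ j, v j * pd lam j x) * (v i * B x i) := fun i => by
    simp only [hdelta]; ring
  simp only [hterm, Finset.sum_sub_distrib, ← Finset.mul_sum]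
  ring

end hdelta

def commutatorField (v : V3) (lam₁ lam₂ : V3 → ℝ) : V3 → V3 :=
  fun x a => (∑ i, v i * pd lam₁ i x) * pd lam₂ a x - (∑ i, v i * pd lam₂ i x) * pd lam₁ a x

lemma contDiff_commutatorField {n : WithTop ℕ∞} (v : V3) {lam₁ lam₂ : V3 → ℝ}
    (h₁ : ContDiff ℝ (n + 1) lam₁) (h₂ : ContDiff ℝ (n + 1) lam₂) :
    ContDiff ℝ n (commutatorField v lam₁ lam₂) := by
  have hgrad : ∀ {lam : V3 → ℝ}, ContDiff ℝ (n + 1) lam → ContDiff ℝ n (fun x i => pd lam i x) :=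
    fun h => contDiff_pi.mpr (contDiff_pd h)
  have hg₁ := contDiff_sum_const_mul v (hgrad h₁)
  have hg₂ := contDiff_sum_const_mul v (hgrad h₂)
  exact contDiff_pi.mpr fun a =>
    (hg₁.mul (contDiff_pd h₂ a)).sub (hg₂.mul (contDiff_pd h₁ a))

lemma hdelta_commutator_eq (v : V3) (t : ℝ) (lam₁ lam₂ : V3 → ℝ) (B : V3 → V3) (x : V3)
    (a : Fin 3) :
    deriv (fun s : ℝ =>
        hdelta v t lam₂ (fun y b => B y b + s * hdelta v t lam₁ B y b) x a) 0
      - deriv (fun s : ℝ =>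
          hdelta v t lam₁ (fun y b => B y b + s * hdelta v t lam₂ B y b) x a) 0
      = (2 * t ^ 3 * (∑ i, v i * B x i) ^ 2 + (1 / 2) * t ^ 4 * (∑ i, v i * B x i) ^ 3)
          * commutatorField v lam₁ lam₂ x a := by
  rw [deriv_hdelta_add_smul, deriv_hdelta_add_smul, sum_mul_hdelta, sum_mul_hdelta]
  simp only [commutatorField, hdelta]
  ring

theorem truncated_deformed_CS_gauge_algebra_abelian
    (v : V3) (lam₁ lam₂ : V3 → ℝ) (B : V3 → V3)
    (h1 : ContDiff ℝ (⊤ : ℕ∞) lam₁) (h2 : ContDiff ℝ (⊤ : ℕ∞) lam₂)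
    (hB : ContDiff ℝ (⊤ : ℕ∞) B) :
    ∃ (N : ℕ) (c : ℕ → V3 → V3),
      (∀ k, ContDiff ℝ (⊤ : ℕ∞) (c k)) ∧
      (∀ (t : ℝ) (x : V3) (a : Fin 3),
        deriv (fun s : ℝ =>
            hdelta v t lam₂ (fun y b => B y b + s * hdelta v t lam₁ B y b) x a) 0
          - deriv (fun s : ℝ =>
              hdelta v t lam₁ (fun y b => B y b + s * hdelta v t lam₂ B y b) x a) 0
        = ∑ k ∈ Finset.range (N + 1), c k x a * t ^ k) ∧
      c 0 = 0 ∧ c 1 = 0 ∧ c 2 = 0 := by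
  set w : V3 → ℝ := fun x => ∑ i, v i * B x i
  have hw : ContDiff ℝ (⊤ : ℕ∞) w := contDiff_sum_const_mul v hB
  have hA : ContDiff ℝ (⊤ : ℕ∞) (commutatorField v lam₁ lam₂) :=
    contDiff_commutatorField v (by simpa using h1) (by simpa using h2)
  refine ⟨4, fun k x => (if k = 3 then 2 * w x ^ 2 else if k = 4 then (1 / 2) * w x ^ 3 else 0)
      • commutatorField v lam₁ lam₂ x, fun k => ?_, fun t x a => ?_, ?_, ?_, ?_⟩
  · refine ContDiff.smul (𝕜' := ℝ) ?_ hA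
    split_ifs
    exacts [contDiff_const.mul (hw.pow 2), contDiff_const.mul (hw.pow 3), contDiff_const]
  · rw [hdelta_commutator_eq]
    simp only [Finset.sum_range_succ, Finset.sum_range_zero, Pi.smul_apply, smul_eq_mul,
      Nat.reduceEqDiff, reduceIte]
    ring
  all_goals funext x; simp
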